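/- arXiv:2410.14030 — 7 statements merged into one kernel-verified Lean document; each statement's English description precedes it below -/
import Mathlib

section
/- Let n ≥ 1 and let A be a nonzero real n×n matrix that is the weighted adjacency matrix of a directed acyclic graph, i.e., there exists a permutation σ of {1,…,n} such that A_{ij} = 0 whenever σ(i) ≥ σ(j). Let B = A + Aᵀ and γ = max_{1≤j≤n} Σ_{i≠j} |B_{ij}| (note γ > 0 since A ≠ 0). Then the matrix Â = I − Aᵀ/γ satisfies ‖Â‖₂ ≤ 2, where ‖·‖₂ denotes the spectral norm (the ℓ²→ℓ² operator norm). -/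
open Matrix
/-- The spectral norm (ℓ²→ℓ² operator norm) of a real matrix. -/
noncomputable def matSpectralNorm {m n : Type*} [Fintype m] [Fintype n] [DecidableEq n]
    (M : Matrix m n ℝ) : ℝ :=
  ‖LinearMap.toContinuousLinearMap (Matrix.toEuclideanLin M)‖

/-!
Since the graph is acyclic, `A i j` and `A j i` are never both nonzero, so `|A i j| ≤ |B i j|` and
the diagonal of `A` vanishes. Hence every row and every column of `|A|` sums to at most `γ`, and
the Schur test gives `‖A‖₂ ≤ γ`. The triangle inequality then yields
`‖I - Aᵀ/γ‖₂ ≤ 1 + ‖A‖₂/γ ≤ 2`.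
-/

open scoped Matrix.Norms.L2Operator

namespace Matrix

variable {𝕜 m n : Type*} [RCLike 𝕜] [Fintype m] [Fintype n]

theorem l2_opNorm_one_le [DecidableEq n] : ‖(1 : Matrix n n 𝕜)‖ ≤ 1 := by
  rw [cstar_norm_def, map_one]
  exact ContinuousLinearMap.norm_id_le

theorem sum_norm_mulVec_sq_le {M : Matrix m n 𝕜} {R C : ℝ} (hR₀ : 0 ≤ R)
    (hR : ∀ i, ∑ j, ‖M i j‖ ≤ R) (hC : ∀ j, ∑ i, ‖M i j‖ ≤ C) (x : n → 𝕜) :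
    ∑ i, ‖(M *ᵥ x) i‖ ^ 2 ≤ R * C * ∑ j, ‖x j‖ ^ 2 := by
  have row_bound (i : m) :
      ‖(M *ᵥ x) i‖ ^ 2 ≤ (∑ j, ‖M i j‖) * ∑ j, ‖M i j‖ * ‖x j‖ ^ 2 := by
    calc ‖(M *ᵥ x) i‖ ^ 2 ≤ (∑ j, ‖M i j‖ * ‖x j‖) ^ 2 := by
          gcongr
          exact (norm_sum_le _ _).trans_eq (by simp only [norm_mul])
      _ ≤ _ := Finset.sum_sq_le_sum_mul_sum_of_sq_le_mul _ (fun _ _ => norm_nonneg _)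
          (fun _ _ => by positivity) fun _ _ => le_of_eq (by ring)
  calc ∑ i, ‖(M *ᵥ x) i‖ ^ 2 ≤ ∑ i, R * ∑ j, ‖M i j‖ * ‖x j‖ ^ 2 := by
        gcongr with i
        exact (row_bound i).trans (by gcongr; exact hR i)
    _ = R * ∑ j, (∑ i, ‖M i j‖) * ‖x j‖ ^ 2 := by
        simp only [← Finset.mul_sum, Finset.sum_mul]
        rw [Finset.sum_comm]
    _ ≤ R * ∑ j, C * ‖x j‖ ^ 2 := by gcongr with j; exact hC j
    _ = R * C * ∑ j, ‖x j‖ ^ 2 := by rw [← Finset.mul_sum, mul_assoc]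

/-- The Schur test. -/
theorem l2_opNorm_le_sqrt_of_sum_norm_le [DecidableEq n] {M : Matrix m n 𝕜} {R C : ℝ}
    (hR₀ : 0 ≤ R) (hR : ∀ i, ∑ j, ‖M i j‖ ≤ R) (hC : ∀ j, ∑ i, ‖M i j‖ ≤ C) :
    ‖M‖ ≤ √(R * C) := by
  refine ContinuousLinearMap.opNorm_le_bound _ (Real.sqrt_nonneg _) fun x => ?_
  rw [EuclideanSpace.norm_eq, EuclideanSpace.norm_eq, ← Real.sqrt_mul' _ (by positivity)]
  exact Real.sqrt_le_sqrt (sum_norm_mulVec_sq_le hR₀ hR hC x)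

variable [DecidableEq n] {A : Matrix n n ℝ}

theorem sum_abs_col_le_sum_erase_abs_add_transpose (hA : ∀ i j, A i j = 0 ∨ A j i = 0) (j : n) :
    ∑ i, |A i j| ≤ ∑ i ∈ Finset.univ.erase j, |(A + Aᵀ) i j| := by
  have hdiag : |A j j| = 0 := by simpa using hA j j
  rw [← Finset.sum_erase (f := fun i => |A i j|) _ hdiag]
  refine Finset.sum_le_sum fun i _ => ?_
  rcases hA i j with h | h <;> simp [h]

theorem sum_abs_row_le_sum_erase_abs_add_transpose (hA : ∀ i j, A i j = 0 ∨ A j i = 0) (i : n) :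
    ∑ j, |A i j| ≤ ∑ j ∈ Finset.univ.erase i, |(A + Aᵀ) j i| := by
  simpa [add_comm] using
    sum_abs_col_le_sum_erase_abs_add_transpose (A := Aᵀ) (fun i j => hA j i) i

end Matrix

theorem dag_normalized_adjacency_spectralNorm_le_two_general {n : ℕ} (hn : 1 ≤ n)
    (A : Matrix (Fin n) (Fin n) ℝ)
    (hdag : ∃ σ : Equiv.Perm (Fin n), ∀ i j, σ j ≤ σ i → A i j = 0) :
    matSpectralNorm
      ((1 : Matrix (Fin n) (Fin n) ℝ) -
        (Finset.univ.sup'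
          (Finset.univ_nonempty_iff.mpr (Fin.pos_iff_nonempty.mp hn))
          (fun j => ∑ i ∈ Finset.univ.erase j, |(A + Aᵀ) i j|))⁻¹ • Aᵀ) ≤ 2 := by
  obtain ⟨σ, hσ⟩ := hdag
  have hA : ∀ i j, A i j = 0 ∨ A j i = 0 := fun i j =>
    (le_total (σ j) (σ i)).imp (hσ i j) (hσ j i)
  set γ := Finset.univ.sup' _ fun j => ∑ i ∈ Finset.univ.erase j, |(A + Aᵀ) i j|
  have hγ_ge (j : Fin n) : ∑ i ∈ Finset.univ.erase j, |(A + Aᵀ) i j| ≤ γ :=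
    Finset.le_sup' (fun j => ∑ i ∈ Finset.univ.erase j, |(A + Aᵀ) i j|) (Finset.mem_univ j)
  have hγ₀ : 0 ≤ γ := (Finset.sum_nonneg fun _ _ => abs_nonneg _).trans (hγ_ge ⟨0, hn⟩)
  have hrow (i : Fin n) : ∑ j, ‖A i j‖ ≤ γ :=
    (sum_abs_row_le_sum_erase_abs_add_transpose hA i).trans (hγ_ge i)
  have hcol (j : Fin n) : ∑ i, ‖A i j‖ ≤ γ :=
    (sum_abs_col_le_sum_erase_abs_add_transpose hA j).trans (hγ_ge j)
  have hnormA : ‖Aᵀ‖ ≤ γ := by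
    rw [← conjTranspose_eq_transpose_of_trivial, l2_opNorm_conjTranspose]
    simpa [Real.sqrt_mul_self hγ₀] using l2_opNorm_le_sqrt_of_sum_norm_le hγ₀ hrow hcol
  calc matSpectralNorm (1 - γ⁻¹ • Aᵀ) = ‖1 - γ⁻¹ • Aᵀ‖ := rfl
    _ ≤ ‖(1 : Matrix (Fin n) (Fin n) ℝ)‖ + γ⁻¹ * ‖Aᵀ‖ := by
        grw [norm_sub_le, norm_smul, Real.norm_of_nonneg (inv_nonneg.mpr hγ₀)]
    _ ≤ 1 + γ⁻¹ * γ := by grw [l2_opNorm_one_le, hnormA]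
    _ ≤ 2 := by grw [inv_mul_le_one]; norm_num

/-- If `A ≠ 0` is the weighted adjacency matrix of a DAG on `n ≥ 1` nodes
(i.e. strictly upper triangular after a simultaneous permutation of rows and columns),
`B = A + Aᵀ` and `γ = max_j ∑_{i ≠ j} |B i j|`, then `Â = I - Aᵀ/γ` has spectral norm
at most `2`. -/
theorem dag_normalized_adjacency_spectralNorm_le_two {n : ℕ} (hn : 1 ≤ n)
    (A : Matrix (Fin n) (Fin n) ℝ) (hA : A ≠ 0)
    (hdag : ∃ σ : Equiv.Perm (Fin n), ∀ i j, σ j ≤ σ i → A i j = 0) :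
    matSpectralNorm
      ((1 : Matrix (Fin n) (Fin n) ℝ) -
        (Finset.univ.sup'
          (Finset.univ_nonempty_iff.mpr (Fin.pos_iff_nonempty.mp hn))
          (fun j => ∑ i ∈ Finset.univ.erase j, |(A + Aᵀ) i j|))⁻¹ • Aᵀ) ≤ 2 :=
  dag_normalized_adjacency_spectralNorm_le_two_general hn A hdag
end

section
/- Let d ≥ 1 and equip ℝ^d with the sup norm ‖v‖∞ = max_i |v_i|. Let α, β > 0 and let f_z, f_r, f_c : ℝ^d → ℝ^d each be 1-Lipschitz with respect to ‖·‖∞. Define z(x) = α·σ(f_z(x)), r(x) = β·σ(f_r(x)), c(x) = tanh(f_c(r(x) ⊙ x)), and h(x) = z(x) ⊙ (c(x) − x), where σ(u) = 1/(1 + exp(−u)) and tanh are applied coordinatewise and ⊙ is the coordinatewise product. Then for all x, y ∈ ℝ^d with ‖x‖∞ ≤ 1 and ‖y‖∞ ≤ 1, ‖h(x) − h(y)‖∞ ≤ α·(5β/4 + 3/2)·‖x − y‖∞. -/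
open scoped NNReal

/-!
The difference `h x - h y` splits as
`α (σ(f_z x) ⊙ ((c x - c y) - (x - y)) + (σ(f_z x) - σ(f_z y)) ⊙ (c y - y))`.
Since `0 ≤ σ ≤ 1`, `|tanh| ≤ 1`, `σ` is `1/4`-Lipschitz and `tanh` is `1`-Lipschitz, the first term
is bounded by `‖c x - c y‖ + ‖x - y‖` and the second by `‖x - y‖/4 · 2`. The same splitting of the
reset gate, using `‖y‖ ≤ 1`, bounds `‖c x - c y‖` by `β (1 + 1/4) ‖x - y‖`.
On `Fin d → ℝ` the Hadamard product `⊙` is the ring product, for which the sup norm is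
submultiplicative, so both splittings are instances of `‖ab - cd‖ ≤ ‖a‖‖b - d‖ + ‖a - c‖‖d‖`.
-/

noncomputable def sigmoid (u : ℝ) : ℝ := 1 / (1 + Real.exp (-u))

/-- The GRU-flow update `h(x) = z(x) ⊙ (c(x) − x)` with
`z(x) = α·σ(f_z(x))`, `r(x) = β·σ(f_r(x))`, `c(x) = tanh(f_c(r(x) ⊙ x))`,
where `σ` and `tanh` act coordinatewise and `⊙` is the coordinatewise product. -/
noncomputable def gruH {d : ℕ} (α β : ℝ) (fz fr fc : (Fin d → ℝ) → (Fin d → ℝ))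
    (x : Fin d → ℝ) : Fin d → ℝ :=
  fun i =>
    (α * sigmoid (fz x i)) *
      (Real.tanh (fc (fun j => (β * sigmoid (fr x j)) * x j) i) - x i)

lemma sigmoid_eq_real_sigmoid : sigmoid = Real.sigmoid := by
  funext u
  rw [sigmoid, Real.sigmoid_def, one_div]

lemma lipschitzWith_sigmoid : LipschitzWith 4⁻¹ sigmoid := by
  rw [sigmoid_eq_real_sigmoid]
  refine lipschitzWith_of_nnnorm_deriv_le differentiable_sigmoid fun u => ?_
  have h0 := Real.sigmoid_nonneg u
  have h1 := Real.sigmoid_le_one u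
  rw [← NNReal.coe_le_coe, coe_nnnorm, Real.deriv_sigmoid, Real.norm_of_nonneg (by nlinarith)]
  push_cast
  nlinarith [sq_nonneg (2 * Real.sigmoid u - 1)]

lemma tanh_eq_two_mul_sigmoid_sub_one (u : ℝ) : Real.tanh u = 2 * sigmoid (2 * u) - 1 := by
  have hexp : Real.exp (-(2 * u)) = Real.exp (-u) ^ 2 := by
    rw [← Real.exp_nat_mul]; ring_nf
  have hinv : Real.exp u * Real.exp (-u) = 1 := by rw [← Real.exp_add, add_neg_cancel, Real.exp_zero]
  rw [Real.tanh_eq_sinh_div_cosh, Real.sinh_eq, Real.cosh_eq, sigmoid, hexp]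
  field_simp
  linear_combination (2 * Real.exp (-u)) * hinv

lemma lipschitzWith_tanh : LipschitzWith 1 Real.tanh := by
  refine LipschitzWith.of_dist_le_mul fun a b => ?_
  have h := lipschitzWith_sigmoid.dist_le_mul (2 * a) (2 * b)
  simp only [Real.dist_eq, NNReal.coe_inv, NNReal.coe_ofNat, NNReal.coe_one] at h ⊢
  rw [tanh_eq_two_mul_sigmoid_sub_one, tanh_eq_two_mul_sigmoid_sub_one]
  calc |2 * sigmoid (2 * a) - 1 - (2 * sigmoid (2 * b) - 1)|
      = 2 * |sigmoid (2 * a) - sigmoid (2 * b)| := by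
        rw [← abs_two, ← abs_mul]; ring_nf
    _ ≤ 2 * (4⁻¹ * |2 * a - 2 * b|) := by gcongr
    _ = 1 * |a - b| := by rw [← mul_sub, abs_mul, abs_two]; ring

lemma norm_mul_sub_mul_le {R : Type*} [NonUnitalSeminormedRing R] (a b c d : R) :
    ‖a * b - c * d‖ ≤ ‖a‖ * ‖b - d‖ + ‖a - c‖ * ‖d‖ :=
  calc ‖a * b - c * d‖ = ‖a * (b - d) + (a - c) * d‖ := by noncomm_ring
    _ ≤ ‖a * (b - d)‖ + ‖(a - c) * d‖ := norm_add_le _ _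
    _ ≤ ‖a‖ * ‖b - d‖ + ‖a - c‖ * ‖d‖ := add_le_add (norm_mul_le _ _) (norm_mul_le _ _)

section Pi

variable {ι : Type*} [Fintype ι]

lemma LipschitzWith.comp_left {α β : Type*} [PseudoEMetricSpace α] [PseudoEMetricSpace β]
    {K : ℝ≥0} {g : α → β} (hg : LipschitzWith K g) :
    LipschitzWith K (fun v : ι → α => g ∘ v) :=
  fun u v =>
    edist_pi_le_iff.2 fun i => (hg (u i) (v i)).trans (by gcongr; exact edist_le_pi_edist u v i)

lemma pi_norm_comp_le_of_forall_le {α E : Type*} [SeminormedAddCommGroup E] {g : α → E} {C : ℝ}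
    (hC : 0 ≤ C) (hg : ∀ a, ‖g a‖ ≤ C) (v : ι → α) : ‖g ∘ v‖ ≤ C :=
  (pi_norm_le_iff_of_nonneg hC).2 fun i => hg (v i)

lemma norm_sigmoid_gate_mul_sub_le {E : Type*} [SeminormedAddCommGroup E]
    {K : ℝ≥0} {f : E → ι → ℝ} (hf : LipschitzWith K f) (x y : E) (u v : ι → ℝ) :
    ‖(sigmoid ∘ f x) * u - (sigmoid ∘ f y) * v‖ ≤ ‖u - v‖ + K / 4 * ‖x - y‖ * ‖v‖ := by
  have hbound : ‖sigmoid ∘ f x‖ ≤ 1 :=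
    pi_norm_comp_le_of_forall_le zero_le_one (fun a => by
      rw [sigmoid_eq_real_sigmoid, Real.norm_of_nonneg (Real.sigmoid_nonneg a)]
      exact Real.sigmoid_le_one a) _
  have hlip : ‖sigmoid ∘ f x - sigmoid ∘ f y‖ ≤ K / 4 * ‖x - y‖ := by
    have := (lipschitzWith_sigmoid.comp_left.comp hf).norm_sub_le x y
    simpa [div_eq_inv_mul, mul_comm, mul_left_comm, mul_assoc] using this
  calc _ ≤ ‖sigmoid ∘ f x‖ * ‖u - v‖ + ‖sigmoid ∘ f x - sigmoid ∘ f y‖ * ‖v‖ :=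
        norm_mul_sub_mul_le _ _ _ _
    _ ≤ 1 * ‖u - v‖ + K / 4 * ‖x - y‖ * ‖v‖ := by gcongr
    _ = _ := by rw [one_mul]

end Pi

lemma gruH_eq_smul {d : ℕ} (α β : ℝ) (fz fr fc : (Fin d → ℝ) → (Fin d → ℝ)) (x : Fin d → ℝ) :
    gruH α β fz fr fc x =
      α • ((sigmoid ∘ fz x) * (Real.tanh ∘ fc (β • ((sigmoid ∘ fr x) * x)) - x)) := by
  funext i
  simp only [gruH, Pi.smul_apply, Pi.mul_apply, Pi.sub_apply, Function.comp_apply, smul_eq_mul,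
    mul_assoc]
  rfl

theorem gruH_lipschitz_on_unit_ball_general {d : ℕ} (α β : ℝ)
    (hα : 0 < α) (hβ : 0 < β) (fz fr fc : (Fin d → ℝ) → (Fin d → ℝ))
    (hfz : LipschitzWith 1 fz) (hfr : LipschitzWith 1 fr) (hfc : LipschitzWith 1 fc) :
    ∀ x y : Fin d → ℝ, ‖x‖ ≤ 1 → ‖y‖ ≤ 1 →
      ‖gruH α β fz fr fc x - gruH α β fz fr fc y‖ ≤
        α * (5 * β / 4 + 3 / 2) * ‖x - y‖ := by
  intro x y _ hy
  set c : (Fin d → ℝ) → Fin d → ℝ := fun x => Real.tanh ∘ fc (β • ((sigmoid ∘ fr x) * x))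
  have hreset : ‖β • ((sigmoid ∘ fr x) * x) - β • ((sigmoid ∘ fr y) * y)‖ ≤
      5 * β / 4 * ‖x - y‖ := by
    have hgate := norm_sigmoid_gate_mul_sub_le hfr x y x y
    rw [← smul_sub, norm_smul, Real.norm_of_nonneg hβ.le]
    calc β * _ ≤ β * (‖x - y‖ + 1 / 4 * ‖x - y‖ * 1) := by
          gcongr
          exact hgate.trans (by push_cast; gcongr)
      _ = _ := by ring
  have hcand : ‖c x - c y‖ ≤ 5 * β / 4 * ‖x - y‖ :=
    ((lipschitzWith_tanh.comp_left.comp hfc).norm_sub_le _ _).trans (by simpa using hreset)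
  have hcy : ‖c y - y‖ ≤ 2 := by
    have := pi_norm_comp_le_of_forall_le (g := Real.tanh) zero_le_one
      (fun u => (Real.abs_tanh_lt_one u).le) (fc (β • ((sigmoid ∘ fr y) * y)))
    linarith [norm_sub_le (c y) y]
  rw [gruH_eq_smul, gruH_eq_smul, ← smul_sub, norm_smul, Real.norm_of_nonneg hα.le, mul_assoc]
  gcongr
  calc _ ≤ ‖(c x - x) - (c y - y)‖ + 1 / 4 * ‖x - y‖ * ‖c y - y‖ := by
        simpa using norm_sigmoid_gate_mul_sub_le hfz x y (c x - x) (c y - y)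
    _ ≤ (‖c x - c y‖ + ‖x - y‖) + 1 / 4 * ‖x - y‖ * 2 := by
        rw [sub_sub_sub_comm]
        gcongr
        exact norm_sub_le _ _
    _ ≤ _ := by linarith

/-- If `f_z, f_r, f_c` are `1`-Lipschitz in the sup norm and `α, β > 0`, then the
GRU-flow update `h` satisfies `‖h x − h y‖∞ ≤ α (5β/4 + 3/2) ‖x − y‖∞` on the unit ball. -/
theorem gruH_lipschitz_on_unit_ball {d : ℕ} (hd : 1 ≤ d) (α β : ℝ)
    (hα : 0 < α) (hβ : 0 < β) (fz fr fc : (Fin d → ℝ) → (Fin d → ℝ))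
    (hfz : LipschitzWith 1 fz) (hfr : LipschitzWith 1 fr) (hfc : LipschitzWith 1 fc) :
    ∀ x y : Fin d → ℝ, ‖x‖ ≤ 1 → ‖y‖ ≤ 1 →
      ‖gruH α β fz fr fc x - gruH α β fz fr fc y‖ ≤
        α * (5 * β / 4 + 3 / 2) * ‖x - y‖ :=
  gruH_lipschitz_on_unit_ball_general α β hα hβ fz fr fc hfz hfr hfc
end

section
/- Let Â be a real n×n matrix, W a real d×m matrix, and U a real m×d matrix. Define the map G on real n×d matrices by G(X) = Â·relu(Â·X·W)·U, where relu is applied entrywise (relu(t) = max(t, 0)). Then for all real n×d matrices X, Y, ‖G(X) − G(Y)‖_F ≤ ‖Â‖₂²·‖W‖₂·‖U‖₂·‖X − Y‖_F, where ‖·‖_F is the Frobenius norm and ‖·‖₂ is the spectral norm. In particular, if ‖Â‖₂²·‖W‖₂·‖U‖₂ < 1, then G is a contraction with respect to the Frobenius norm. -/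
open Matrix

/-- The Frobenius norm of a real matrix. -/
noncomputable def frobeniusNorm {m n : Type*} [Fintype m] [Fintype n]
    (M : Matrix m n ℝ) : ℝ :=
  Real.sqrt (∑ i, ∑ j, (M i j) ^ 2)

/-!
Multiplying a matrix on the left by `A` changes each column `v` into `A v`, of length at most
`‖A‖₂ ‖v‖`, so `‖A B‖_F ≤ ‖A‖₂ ‖B‖_F`; transposing gives `‖B C‖_F ≤ ‖B‖_F ‖C‖₂`. Since relu is
1-Lipschitz entrywise, each of the two layers `Z ↦ Â Z M` contributes the factor `‖Â‖₂ ‖M‖₂`.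
-/

open scoped Matrix.Norms.L2Operator

section

variable {l m n p : Type*} [Fintype l] [Fintype m] [Fintype n] [Fintype p]

lemma frobeniusNorm_nonneg (M : Matrix m n ℝ) : 0 ≤ frobeniusNorm M :=
  Real.sqrt_nonneg _

lemma sq_frobeniusNorm (M : Matrix m n ℝ) : frobeniusNorm M ^ 2 = ∑ i, ∑ j, M i j ^ 2 :=
  Real.sq_sqrt (by positivity)

lemma frobeniusNorm_transpose (M : Matrix m n ℝ) : frobeniusNorm Mᵀ = frobeniusNorm M := by
  rw [frobeniusNorm, frobeniusNorm, Finset.sum_comm]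
  rfl

lemma matSpectralNorm_eq_l2_opNorm [DecidableEq n] (M : Matrix m n ℝ) :
    matSpectralNorm M = ‖M‖ :=
  rfl

lemma matSpectralNorm_nonneg [DecidableEq n] (M : Matrix m n ℝ) : 0 ≤ matSpectralNorm M :=
  norm_nonneg _

lemma matSpectralNorm_transpose [DecidableEq m] [DecidableEq n] (M : Matrix m n ℝ) :
    matSpectralNorm Mᵀ = matSpectralNorm M := by
  simpa only [matSpectralNorm_eq_l2_opNorm, conjTranspose_eq_transpose_of_trivial]
    using l2_opNorm_conjTranspose M

lemma sum_sq_mulVec_le [DecidableEq n] (M : Matrix m n ℝ) (v : n → ℝ) :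
    ∑ i, (M *ᵥ v) i ^ 2 ≤ matSpectralNorm M ^ 2 * ∑ j, v j ^ 2 := by
  have h := pow_le_pow_left₀ (norm_nonneg _) (l2_opNorm_mulVec M (WithLp.toLp 2 v)) 2
  simpa [mul_pow, EuclideanSpace.norm_sq_eq, matSpectralNorm_eq_l2_opNorm] using h

lemma frobeniusNorm_mul_le_matSpectralNorm_mul [DecidableEq m] (A : Matrix l m ℝ)
    (B : Matrix m n ℝ) : frobeniusNorm (A * B) ≤ matSpectralNorm A * frobeniusNorm B := by
  refine (sq_le_sq₀ (frobeniusNorm_nonneg _)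
    (mul_nonneg (matSpectralNorm_nonneg A) (frobeniusNorm_nonneg B))).1 ?_
  rw [mul_pow, sq_frobeniusNorm, sq_frobeniusNorm, Finset.sum_comm,
    Finset.sum_comm (f := fun i j => B i j ^ 2), Finset.mul_sum]
  exact Finset.sum_le_sum fun j _ => sum_sq_mulVec_le A (fun k => B k j)

lemma frobeniusNorm_mul_le_mul_matSpectralNorm [DecidableEq m] [DecidableEq n] (A : Matrix l m ℝ)
    (B : Matrix m n ℝ) : frobeniusNorm (A * B) ≤ frobeniusNorm A * matSpectralNorm B := by
  calc frobeniusNorm (A * B) = frobeniusNorm (Bᵀ * Aᵀ) := by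
        rw [← transpose_mul, frobeniusNorm_transpose]
    _ ≤ matSpectralNorm Bᵀ * frobeniusNorm Aᵀ := frobeniusNorm_mul_le_matSpectralNorm_mul _ _
    _ = frobeniusNorm A * matSpectralNorm B := by
        rw [matSpectralNorm_transpose, frobeniusNorm_transpose, mul_comm]

lemma frobeniusNorm_mul_mul_sub_le [DecidableEq m] [DecidableEq n] [DecidableEq p]
    (A : Matrix l m ℝ) (X Y : Matrix m n ℝ) (B : Matrix n p ℝ) :
    frobeniusNorm (A * X * B - A * Y * B) ≤
      matSpectralNorm A * frobeniusNorm (X - Y) * matSpectralNorm B := by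
  calc frobeniusNorm (A * X * B - A * Y * B) = frobeniusNorm (A * ((X - Y) * B)) := by
        rw [Matrix.sub_mul, Matrix.mul_sub, Matrix.mul_assoc, Matrix.mul_assoc]
    _ ≤ matSpectralNorm A * frobeniusNorm ((X - Y) * B) :=
        frobeniusNorm_mul_le_matSpectralNorm_mul _ _
    _ ≤ matSpectralNorm A * (frobeniusNorm (X - Y) * matSpectralNorm B) :=
        mul_le_mul_of_nonneg_left (frobeniusNorm_mul_le_mul_matSpectralNorm _ _)
          (matSpectralNorm_nonneg A)
    _ = matSpectralNorm A * frobeniusNorm (X - Y) * matSpectralNorm B := (mul_assoc ..).symm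

lemma frobeniusNorm_map_sub_map_le {f : ℝ → ℝ} {K : NNReal} (hf : LipschitzWith K f)
    (P Q : Matrix m n ℝ) : frobeniusNorm (P.map f - Q.map f) ≤ K * frobeniusNorm (P - Q) := by
  refine (sq_le_sq₀ (frobeniusNorm_nonneg _) (by positivity [frobeniusNorm_nonneg (P - Q)])).1 ?_
  rw [mul_pow, sq_frobeniusNorm, sq_frobeniusNorm, Finset.mul_sum]
  refine Finset.sum_le_sum fun i _ => ?_
  rw [Finset.mul_sum]
  refine Finset.sum_le_sum fun j _ => ?_
  have h := pow_le_pow_left₀ dist_nonneg (hf.dist_le_mul (P i j) (Q i j)) 2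
  rw [Real.dist_eq, Real.dist_eq, sq_abs, mul_pow, sq_abs] at h
  simpa using h

end

/-- The two-layer GCN `G(X) = Â · relu(Â · X · W) · U` (with entrywise `relu`) satisfies
`‖G X − G Y‖_F ≤ ‖Â‖₂² ‖W‖₂ ‖U‖₂ ‖X − Y‖_F`; in particular, if
`‖Â‖₂² ‖W‖₂ ‖U‖₂ < 1` then `G` is a contraction in the Frobenius norm. -/
theorem gcn_lipschitz_frobenius {n d m : ℕ}
    (Ahat : Matrix (Fin n) (Fin n) ℝ) (W : Matrix (Fin d) (Fin m) ℝ)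
    (U : Matrix (Fin m) (Fin d) ℝ) :
    (∀ X Y : Matrix (Fin n) (Fin d) ℝ,
        frobeniusNorm
            (Ahat * ((Ahat * X * W).map fun t => max t 0) * U -
              Ahat * ((Ahat * Y * W).map fun t => max t 0) * U) ≤
          matSpectralNorm Ahat ^ 2 * matSpectralNorm W * matSpectralNorm U *
            frobeniusNorm (X - Y)) ∧
      (matSpectralNorm Ahat ^ 2 * matSpectralNorm W * matSpectralNorm U < 1 →
        ∃ k : ℝ, k < 1 ∧ ∀ X Y : Matrix (Fin n) (Fin d) ℝ,
          frobeniusNorm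
              (Ahat * ((Ahat * X * W).map fun t => max t 0) * U -
                Ahat * ((Ahat * Y * W).map fun t => max t 0) * U) ≤
            k * frobeniusNorm (X - Y)) := by
  have relu_lipschitz : LipschitzWith 1 fun t : ℝ => max t 0 := LipschitzWith.id.max_const 0
  have lipschitz (X Y : Matrix (Fin n) (Fin d) ℝ) :
      frobeniusNorm
          (Ahat * ((Ahat * X * W).map fun t => max t 0) * U -
            Ahat * ((Ahat * Y * W).map fun t => max t 0) * U) ≤
        matSpectralNorm Ahat ^ 2 * matSpectralNorm W * matSpectralNorm U *
          frobeniusNorm (X - Y) := by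
    calc _ ≤ matSpectralNorm Ahat * frobeniusNorm (((Ahat * X * W).map fun t => max t 0) -
            (Ahat * Y * W).map fun t => max t 0) * matSpectralNorm U :=
          frobeniusNorm_mul_mul_sub_le _ _ _ _
      _ ≤ matSpectralNorm Ahat * frobeniusNorm (Ahat * X * W - Ahat * Y * W) *
            matSpectralNorm U := by
          gcongr
          · exact matSpectralNorm_nonneg U
          · exact matSpectralNorm_nonneg Ahat
          · simpa using frobeniusNorm_map_sub_map_le relu_lipschitz _ _
      _ ≤ matSpectralNorm Ahat * (matSpectralNorm Ahat * frobeniusNorm (X - Y) *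
            matSpectralNorm W) * matSpectralNorm U := by
          gcongr
          · exact matSpectralNorm_nonneg U
          · exact matSpectralNorm_nonneg Ahat
          · exact frobeniusNorm_mul_mul_sub_le _ _ _ _
      _ = _ := by ring
  exact ⟨lipschitz, fun hlt => ⟨_, hlt, lipschitz⟩⟩
end

section
/- Let M and H be real n×n matrices. Then the function t ↦ tr(expm(M + t·H)) from ℝ to ℝ is differentiable at t = 0, with derivative equal to tr(expm(M)·H), where expm denotes the matrix exponential and tr the trace. -/
/-!
The argument works for any continuous linear functional `τ` with `τ (x y) = τ (y x)`, such as
the trace. Expand `exp` into its power series and differentiate term by term; on the unit ball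
the derivatives of the terms are dominated by `‖τ‖ ‖b‖ k R^(k-1) / k!` with `R = ‖a‖ + ‖b‖`.
By the product rule the derivative of `x^k`, `x = a + t b`, is `∑ x^(k-1-i) b x^i`, and `τ`
takes the same value `τ(x^(k-1) b)` on all `k` summands. Hence the derivative of
`τ((a + t b)^k) / k!` at `0` is `τ(a^(k-1) b) / (k-1)!`, and these sum to `τ(exp(a) b)`.
-/

open Matrix NormedSpace Finset
open scoped Nat

section Factorial

variable {𝕂 : Type*} [Field 𝕂] [CharZero 𝕂]

theorem inv_factorial_succ_mul_succ (k : ℕ) :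
    ((k + 1)! : 𝕂)⁻¹ * (k + 1 : ℕ) = (k ! : 𝕂)⁻¹ := by
  rw [Nat.factorial_succ, Nat.cast_mul, mul_inv, mul_comm, ← mul_assoc,
    mul_inv_cancel₀ (Nat.cast_ne_zero.mpr k.succ_ne_zero), one_mul]

theorem tsum_inv_factorial_mul_natCast_mul [TopologicalSpace 𝕂] [ContinuousAdd 𝕂] [T2Space 𝕂]
    {f : ℕ → 𝕂} (hf : Summable fun k => (k ! : 𝕂)⁻¹ * f k) :
    ∑' k, (k ! : 𝕂)⁻¹ * (k * f (k - 1)) = ∑' k, (k ! : 𝕂)⁻¹ * f k := by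
  have hshift : (fun k => ((k + 1)! : 𝕂)⁻¹ * ((k + 1 : ℕ) * f (k + 1 - 1)))
      = fun k => (k ! : 𝕂)⁻¹ * f k := by
    funext k
    rw [← mul_assoc, inv_factorial_succ_mul_succ, Nat.add_sub_cancel]
  rw [tsum_eq_zero_add' (by rw [hshift]; exact hf), hshift]
  simp

end Factorial

theorem summable_inv_factorial_mul_natCast_mul_pow_pred (r : ℝ) :
    Summable fun k => (k ! : ℝ)⁻¹ * (k * r ^ (k - 1)) := by
  rw [← summable_nat_add_iff 1]
  refine (Real.summable_pow_div_factorial r).congr fun k => ?_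
  rw [← mul_assoc, inv_factorial_succ_mul_succ, Nat.add_sub_cancel, div_eq_inv_mul]

theorem norm_pow_mul_le {𝔸 : Type*} [NormedRing 𝔸] (x b : 𝔸) (j : ℕ) :
    ‖x ^ j * b‖ ≤ ‖x‖ ^ j * ‖b‖ := by
  induction j with
  | zero => simp
  | succ j ih =>
    calc ‖x ^ (j + 1) * b‖ = ‖x * (x ^ j * b)‖ := by rw [pow_succ', mul_assoc]
      _ ≤ ‖x‖ * (‖x‖ ^ j * ‖b‖) := norm_mul_le_of_le le_rfl ih
      _ = ‖x‖ ^ (j + 1) * ‖b‖ := by ring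

section TraceLike

variable {𝕂 𝔸 : Type*} [RCLike 𝕂] [NormedRing 𝔸] [NormedAlgebra 𝕂 𝔸]

theorem hasSum_map_exp [CompleteSpace 𝔸] {E : Type*} [NormedAddCommGroup E] [NormedSpace 𝕂 E]
    (L : 𝔸 →L[𝕂] E) (x : 𝔸) :
    HasSum (fun k => (k ! : 𝕂)⁻¹ • L (x ^ k)) (L (exp x)) := by
  simpa only [map_smul] using L.hasSum (exp_series_hasSum_exp' (𝕂 := 𝕂) x)

variable (τ : 𝔸 →L[𝕂] 𝕂) (hτ : ∀ x y, τ (x * y) = τ (y * x))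
include hτ

theorem map_sum_pow_mul_pow (x b : 𝔸) (k : ℕ) :
    τ (∑ i ∈ range k, x ^ (k - 1 - i) * b * x ^ i) = k * τ (x ^ (k - 1) * b) := by
  have hcyclic : ∀ i ∈ range k, τ (x ^ (k - 1 - i) * b * x ^ i) = τ (x ^ (k - 1) * b) := by
    intro i hi
    rw [hτ, ← mul_assoc, ← pow_add, Nat.add_sub_of_le (Nat.le_sub_one_of_lt (mem_range.mp hi))]
  rw [map_sum, sum_congr rfl hcyclic, sum_const, card_range, nsmul_eq_mul]

theorem HasDerivAt.map_pow {f : 𝕂 → 𝔸} {f' : 𝔸} {t : 𝕂} (hf : HasDerivAt f f' t) (k : ℕ) :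
    HasDerivAt (fun s => τ (f s ^ k)) (k * τ (f t ^ (k - 1) * f')) t := by
  have h := τ.hasFDerivAt.comp_hasDerivAt t ((hasFDerivAt_pow' k).comp_hasDerivAt t hf)
  rw [← map_sum_pow_mul_pow τ hτ]
  simpa [Function.comp_def] using h

theorem hasDerivAt_map_exp_add_smul [CompleteSpace 𝔸] (a b : 𝔸) :
    HasDerivAt (fun t : 𝕂 => τ (exp (a + t • b))) (τ (exp a * b)) 0 := by
  set R := ‖a‖ + ‖b‖
  have hline (s : 𝕂) : HasDerivAt (fun s : 𝕂 => a + s • b) b s := by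
    simpa using ((hasDerivAt_id s).smul_const b).const_add a
  have hterm (k : ℕ) (s : 𝕂) := ((hline s).map_pow τ hτ k).const_mul (k ! : 𝕂)⁻¹
  have hbound (k : ℕ) (s : 𝕂) (hs : s ∈ Metric.ball 0 1) :
      ‖(k ! : 𝕂)⁻¹ * (k * τ ((a + s • b) ^ (k - 1) * b))‖
        ≤ ‖τ‖ * ‖b‖ * ((k ! : ℝ)⁻¹ * (k * R ^ (k - 1))) := by
    have hR : ‖a + s • b‖ ≤ R := by
      refine (norm_add_le _ _).trans (add_le_add_right ?_ _)
      rw [norm_smul]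
      exact mul_le_of_le_one_left (norm_nonneg b) (mem_ball_zero_iff.mp hs).le
    have hτy : ‖τ ((a + s • b) ^ (k - 1) * b)‖ ≤ ‖τ‖ * (R ^ (k - 1) * ‖b‖) :=
      τ.le_opNorm_of_le ((norm_pow_mul_le _ _ _).trans (by gcongr))
    rw [norm_mul, norm_mul, norm_inv, RCLike.norm_natCast, RCLike.norm_natCast]
    calc (k ! : ℝ)⁻¹ * (k * ‖τ ((a + s • b) ^ (k - 1) * b)‖)
        ≤ (k ! : ℝ)⁻¹ * (k * (‖τ‖ * (R ^ (k - 1) * ‖b‖))) := by gcongr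
      _ = ‖τ‖ * ‖b‖ * ((k ! : ℝ)⁻¹ * (k * R ^ (k - 1))) := by ring
  have hsum := hasDerivAt_tsum_of_isPreconnected
    ((summable_inv_factorial_mul_natCast_mul_pow_pred R).mul_left (‖τ‖ * ‖b‖))
    Metric.isOpen_ball (convex_ball 0 1).isPreconnected (fun k s _ => hterm k s) hbound
    (Metric.mem_ball_self one_pos) (hasSum_map_exp τ (a + (0 : 𝕂) • b)).summable
    (Metric.mem_ball_self one_pos)
  have hexp (t : 𝕂) : τ (exp (a + t • b)) = ∑' k, (k ! : 𝕂)⁻¹ * τ ((a + t • b) ^ k) :=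
    (hasSum_map_exp τ _).tsum_eq.symm
  have hmul : HasSum (fun k => (k ! : 𝕂)⁻¹ * τ (a ^ k * b)) (τ (exp a * b)) :=
    hasSum_map_exp (τ.comp ((ContinuousLinearMap.mul 𝕂 𝔸).flip b)) a
  simp only [zero_smul, add_zero, tsum_inv_factorial_mul_natCast_mul hmul.summable,
    hmul.tsum_eq] at hsum
  simpa only [hexp] using hsum

end TraceLike

/-- For real `n × n` matrices `M` and `H`, the map `t ↦ tr(expm(M + t·H))` is
differentiable at `t = 0` with derivative `tr(expm(M)·H)`. -/
theorem hasDerivAt_trace_exp {n : ℕ} (M H : Matrix (Fin n) (Fin n) ℝ) :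
    HasDerivAt (fun t : ℝ => (NormedSpace.exp (M + t • H)).trace)
      ((NormedSpace.exp M * H).trace) 0 := by
  -- `exp` only depends on the topology, so any norm inducing the product topology will do.
  let _ : NormedRing (Matrix (Fin n) (Fin n) ℝ) := Matrix.linftyOpNormedRing
  let _ : NormedAlgebra ℝ (Matrix (Fin n) (Fin n) ℝ) := Matrix.linftyOpNormedAlgebra
  exact hasDerivAt_map_exp_add_smul (traceLinearMap (Fin n) ℝ ℝ).toContinuousLinearMap
    trace_mul_comm M H
end

section
/- Let h : ℝ^{n×n} → ℝ be defined by h(A) = tr(expm(A ⊙ A)), where A ⊙ A is the entrywise (Hadamard) square of A, expm is the matrix exponential, and tr is the trace. Then h is differentiable at every real n×n matrix A, and its differential applied to a direction H is Dh(A)[H] = Σ_{i,j} (expm(A ⊙ A))_{ji} · 2A_{ij} · H_{ij}; equivalently, the gradient of h at A is ∇h(A) = expm(A ⊙ A)ᵀ ⊙ 2A with respect to the trace inner product ⟨X, Y⟩ = Σ_{i,j} X_{ij}Y_{ij}. -/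
/-!
For a continuous linear functional `τ` on a Banach algebra that is tracial, `τ (a * b) = τ (b * a)`,
the derivative of `y ↦ τ (y ^ (k + 1))` at `x` is `h ↦ (k + 1) τ (x ^ k * h)`: each of the `k + 1`
terms `x ^ (k - i) * h * x ^ i` of the noncommutative product rule cycles to `x ^ k * h`.
Differentiating the exponential series termwise, which the locally uniform bound
`‖τ‖ ‖y‖ ^ k / k!` on the derivatives justifies, gives `D(τ ∘ exp)(x) h = τ (exp x * h)`.
For `τ = trace` and the chain rule through `A ↦ A ⊙ A`, whose derivative is `H ↦ 2 A ⊙ H`,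
this is `tr (exp (A ⊙ A) * (2 A ⊙ H)) = ∑ i j, exp (A ⊙ A) j i * 2 A i j * H i j`.
-/

open Matrix

attribute [local instance] Matrix.normedAddCommGroup Matrix.normedSpace

open scoped Nat

section TracialExp

variable {𝕂 𝔸 F : Type*} [RCLike 𝕂] [NormedRing 𝔸] [NormedAlgebra 𝕂 𝔸]
  [NormedAddCommGroup F] [NormedSpace 𝕂 F]

theorem ContinuousLinearMap.norm_mul_pow_le (a : 𝔸) (m : ℕ) :
    ‖ContinuousLinearMap.mul 𝕂 𝔸 (a ^ m)‖ ≤ ‖a‖ ^ m := by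
  refine ContinuousLinearMap.opNorm_le_bound _ (by positivity) fun h => ?_
  induction m with
  | zero => simp
  | succ m ih =>
    calc ‖a ^ (m + 1) * h‖ = ‖a * (a ^ m * h)‖ := by rw [pow_succ', mul_assoc]
      _ ≤ ‖a‖ * (‖a‖ ^ m * ‖h‖) := (norm_mul_le _ _).trans (by gcongr; exact ih)
      _ = ‖a‖ ^ (m + 1) * ‖h‖ := by ring

variable (τ : 𝔸 →L[𝕂] F)

theorem norm_factorial_inv_smul_comp_mul_pow_le (y : 𝔸) (k : ℕ) :
    ‖(k ! : 𝕂)⁻¹ • τ ∘L ContinuousLinearMap.mul 𝕂 𝔸 (y ^ k)‖ ≤ ‖τ‖ * (‖y‖ ^ k / k !) :=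
  calc _ = (k ! : ℝ)⁻¹ * ‖τ ∘L ContinuousLinearMap.mul 𝕂 𝔸 (y ^ k)‖ := by
        rw [norm_smul, norm_inv, RCLike.norm_natCast]
    _ ≤ (k ! : ℝ)⁻¹ * (‖τ‖ * ‖y‖ ^ k) := by
        gcongr
        exact (τ.opNorm_comp_le _).trans (by gcongr; exact ContinuousLinearMap.norm_mul_pow_le y k)
    _ = ‖τ‖ * (‖y‖ ^ k / k !) := by ring

theorem hasFDerivAt_factorial_inv_smul_map_pow_succ (hτ : ∀ a b, τ (a * b) = τ (b * a))
    (k : ℕ) (x : 𝔸) :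
    HasFDerivAt (fun y => ((k + 1)! : 𝕂)⁻¹ • τ (y ^ (k + 1)))
      ((k ! : 𝕂)⁻¹ • τ ∘L ContinuousLinearMap.mul 𝕂 𝔸 (x ^ k)) x := by
  refine ((τ.hasFDerivAt.comp x (hasFDerivAt_pow' (k + 1))).const_smul _).congr_fderiv ?_
  have cyclic : ∀ h, ∀ i ∈ Finset.range (k + 1), τ (x ^ (k - i) * h * x ^ i) = τ (x ^ k * h) := by
    intro h i hi
    rw [hτ, ← mul_assoc, ← pow_add, Nat.add_sub_of_le (Finset.mem_range_succ_iff.mp hi)]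
  ext h
  have hk : ((k + 1)! : 𝕂)⁻¹ * (k + 1) = (k ! : 𝕂)⁻¹ := by
    rw [Nat.factorial_succ]
    push_cast
    field_simp
  simp [Finset.sum_congr rfl (cyclic h), ← Nat.cast_smul_eq_nsmul 𝕂, smul_smul, hk]

variable [CompleteSpace 𝔸]

theorem map_exp_eq_add_tsum (y : 𝔸) :
    τ (NormedSpace.exp y) = τ 1 + ∑' k : ℕ, ((k + 1)! : 𝕂)⁻¹ • τ (y ^ (k + 1)) := by
  have hsum := (NormedSpace.exp_series_hasSum_exp' (𝕂 := 𝕂) y).mapL τ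
  rw [← hsum.tsum_eq, hsum.summable.tsum_eq_zero_add]
  simp

theorem hasFDerivAt_map_exp_of_map_mul_comm [CompleteSpace F]
    (hτ : ∀ a b, τ (a * b) = τ (b * a)) (x : 𝔸) :
    HasFDerivAt (fun y => τ (NormedSpace.exp y))
      (τ ∘L ContinuousLinearMap.mul 𝕂 𝔸 (NormedSpace.exp x)) x := by
  set r := ‖x‖ + 1
  have hbound : ∀ (k : ℕ), ∀ y ∈ Metric.ball x 1,
      ‖(k ! : 𝕂)⁻¹ • τ ∘L ContinuousLinearMap.mul 𝕂 𝔸 (y ^ k)‖ ≤ ‖τ‖ * (r ^ k / k !) := by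
    intro k y hy
    have hy : ‖y‖ ≤ r := by
      rw [Metric.mem_ball, dist_eq_norm] at hy
      linarith [norm_le_norm_add_norm_sub' y x]
    exact (norm_factorial_inv_smul_comp_mul_pow_le τ y k).trans (by gcongr)
  have hsummable : Summable fun k : ℕ => ((k + 1)! : 𝕂)⁻¹ • τ (x ^ (k + 1)) := by
    simpa using (summable_nat_add_iff 1).mpr
      ((NormedSpace.exp_series_hasSum_exp' (𝕂 := 𝕂) x).mapL τ).summable
  have hsum : HasSum (fun k : ℕ => (k ! : 𝕂)⁻¹ • τ ∘L ContinuousLinearMap.mul 𝕂 𝔸 (x ^ k))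
      (τ ∘L ContinuousLinearMap.mul 𝕂 𝔸 (NormedSpace.exp x)) := by
    simpa using (NormedSpace.exp_series_hasSum_exp' (𝕂 := 𝕂) x).mapL
      (ContinuousLinearMap.compL 𝕂 𝔸 𝔸 F τ ∘L ContinuousLinearMap.mul 𝕂 𝔸)
  have hseries := hasFDerivAt_tsum_of_isPreconnected
    ((Real.summable_pow_div_factorial r).mul_left ‖τ‖) Metric.isOpen_ball
    (by let _ := NormedSpace.restrictScalars ℝ 𝕂 𝔸; exact Metric.isPreconnected_ball)
    (fun k y _ => hasFDerivAt_factorial_inv_smul_map_pow_succ τ hτ k y) hbound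
    (Metric.mem_ball_self one_pos) hsummable (Metric.mem_ball_self one_pos)
  rw [funext (map_exp_eq_add_tsum τ), ← hsum.tsum_eq]
  exact hseries.const_add (τ 1)

end TracialExp

namespace Matrix

variable {𝕂 : Type*} [RCLike 𝕂]

-- The sup norm is not submultiplicative; the `L∞` operator norm is, and it induces the same
-- topology, hence the same derivatives.
theorem hasFDerivAt_trace_exp {n : Type*} [Fintype n] [DecidableEq n] (X : Matrix n n 𝕂) :
    HasFDerivAt (fun Y : Matrix n n 𝕂 => (NormedSpace.exp Y).trace)
      (traceLinearMap n 𝕂 𝕂 ∘ₗ LinearMap.mulLeft 𝕂 (NormedSpace.exp X)).toContinuousLinearMap X := by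
  let _ : NormedRing (Matrix n n 𝕂) := Matrix.linftyOpNormedRing
  let _ : NormedAlgebra 𝕂 (Matrix n n 𝕂) := Matrix.linftyOpNormedAlgebra
  have : @CompleteSpace (Matrix n n 𝕂) (Matrix.linftyOpNormedRing (n := n) (α := 𝕂)).toUniformSpace := by
    let _ : NormedAddCommGroup (Matrix n n 𝕂) := Matrix.linftyOpNormedAddCommGroup
    let _ : NormedSpace 𝕂 (Matrix n n 𝕂) := Matrix.linftyOpNormedSpace
    exact FiniteDimensional.complete 𝕂 _
  exact hasFDerivAt_map_exp_of_map_mul_comm (traceLinearMap n 𝕂 𝕂).toContinuousLinearMap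
    trace_mul_comm X

-- `⊙` is the multiplication of the pointwise algebra `m → n → 𝕂`, normed by the sup norm.
theorem hasFDerivAt_hadamard_self {m n : Type*} [Fintype m] [Fintype n] (A : Matrix m n 𝕂) :
    HasFDerivAt (fun B : Matrix m n 𝕂 => B ⊙ B)
      ((2 : 𝕂) • ContinuousLinearMap.mul 𝕂 (m → n → 𝕂) A) A :=
  ((hasFDerivAt_id (E := m → n → 𝕂) A).mul (hasFDerivAt_id (E := m → n → 𝕂) A)).congr_fderiv
    (by rw [two_smul]; rfl)

end Matrix

/-- The acyclicity function `h(A) = tr(expm(A ⊙ A))` is differentiable at every real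
`n × n` matrix `A`, with differential `Dh(A)[H] = ∑_{i,j} (expm(A ⊙ A))_{ji} · 2A_{ij} · H_{ij}`;
i.e. its gradient w.r.t. the trace inner product is `expm(A ⊙ A)ᵀ ⊙ 2A`. -/
theorem differentiable_trace_exp_hadamard_sq {n : ℕ} (A : Matrix (Fin n) (Fin n) ℝ) :
    DifferentiableAt ℝ
        (fun A : Matrix (Fin n) (Fin n) ℝ => (NormedSpace.exp (A ⊙ A)).trace) A ∧
      ∀ H : Matrix (Fin n) (Fin n) ℝ,
        fderiv ℝ (fun A : Matrix (Fin n) (Fin n) ℝ => (NormedSpace.exp (A ⊙ A)).trace) A H =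
          ∑ i, ∑ j, (NormedSpace.exp (A ⊙ A)) j i * (2 * A i j) * H i j := by
  have h : HasFDerivAt (fun A : Matrix (Fin n) (Fin n) ℝ => (NormedSpace.exp (A ⊙ A)).trace) _ A :=
    (Matrix.hasFDerivAt_trace_exp (A ⊙ A)).comp (f := fun B => B ⊙ B) A
      (Matrix.hasFDerivAt_hadamard_self A)
  refine ⟨h.differentiableAt, fun H => ?_⟩
  rw [h.fderiv]
  change (NormedSpace.exp (A ⊙ A) * ((2 : ℝ) • (A ⊙ H))).trace = _
  simp only [trace, diag, mul_apply, Matrix.smul_apply, hadamard_apply, smul_eq_mul]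
  rw [Finset.sum_comm]
  exact Finset.sum_congr rfl fun i _ => Finset.sum_congr rfl fun j _ => by ring
end

section
/- Let M be a real n×n matrix with entrywise nonnegative entries. Then tr(expm(M)) = n if and only if M is nilpotent, i.e., M^n = 0. In particular, for any real n×n matrix A, tr(expm(A ⊙ A)) = n if and only if A ⊙ A is nilpotent, where A ⊙ A is the entrywise square of A. -/
/-!
Expanding the exponential, `tr (exp M) = n + ∑_{k ≥ 1} tr (M ^ k) / k!`, and for `M ≥ 0` every
term of the sum is nonnegative; so the trace is `n` exactly when `tr (M ^ k) = 0` for all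
`k ≥ 1`, i.e. when no walk along positive entries of `M` is closed. Then "some nonempty positive
walk leads from `i` to `j`" is a strict order, so the number of predecessors of a vertex grows
strictly along every positive entry. A positive walk of length `n` would climb `n` times within
`{0, …, n - 1}`, hence `M ^ n = 0`; conversely traces of powers of a nilpotent matrix vanish.
-/

open Matrix NormedSpace Finset
open scoped Nat

namespace Matrix

variable {ι R : Type*} [Fintype ι] [DecidableEq ι]

section Reaches

variable [Semiring R] [LinearOrder R] {M : Matrix ι ι R}

def Reaches (M : Matrix ι ι R) (i j : ι) : Prop :=
  ∃ k, 0 < (M ^ (k + 1)) i j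

open scoped Classical in
noncomputable def reachDepth (M : Matrix ι ι R) (j : ι) : ℕ :=
  #{i | M.Reaches i j}

theorem reachDepth_lt_card (hirr : ∀ i, ¬ M.Reaches i i) (j : ι) :
    M.reachDepth j < Fintype.card ι := by
  classical
  exact card_lt_univ_of_notMem (x := j) (by simpa using hirr j)

variable [IsStrictOrderedRing R]

theorem pow_apply_mul_pow_apply_le_pow_add_apply (hM : ∀ i j, 0 ≤ M i j) (p q : ℕ) (i l j : ι) :
    (M ^ p) i l * (M ^ q) l j ≤ (M ^ (p + q)) i j := by
  rw [pow_add, mul_apply]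
  exact single_le_sum (f := fun x => (M ^ p) i x * (M ^ q) x j)
    (fun x _ => mul_nonneg (pow_apply_nonneg hM p i x) (pow_apply_nonneg hM q x j))
    (mem_univ l)

theorem exists_pos_of_pow_succ_apply_pos (hM : ∀ i j, 0 ≤ M i j) {k : ℕ} {i j : ι}
    (h : 0 < (M ^ (k + 1)) i j) : ∃ l, 0 < M i l ∧ 0 < (M ^ k) l j := by
  rw [pow_succ', mul_apply] at h
  obtain ⟨l, -, hl⟩ := exists_lt_of_sum_lt (f := fun _ => (0 : R)) (by simpa using h)
  exact ⟨l, pos_of_mul_pos_left hl (pow_apply_nonneg hM k l j),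
    pos_of_mul_pos_right hl (hM i l)⟩

theorem Reaches.trans (hM : ∀ i j, 0 ≤ M i j) {i l j : ι} :
    M.Reaches i l → M.Reaches l j → M.Reaches i j := by
  rintro ⟨p, hp⟩ ⟨q, hq⟩
  refine ⟨p + q + 1, (mul_pos hp hq).trans_le ?_⟩
  have hlen : p + q + 1 + 1 = (p + 1) + (q + 1) := by omega
  rw [hlen]
  exact pow_apply_mul_pow_apply_le_pow_add_apply hM (p + 1) (q + 1) i l j

theorem reachDepth_lt_reachDepth (hM : ∀ i j, 0 ≤ M i j) (hirr : ∀ i, ¬ M.Reaches i i)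
    {i j : ι} (hij : M.Reaches i j) : M.reachDepth i < M.reachDepth j := by
  classical
  refine card_lt_card (ssubset_iff_of_subset ?_ |>.2 ⟨i, ?_, ?_⟩)
  · intro x
    simpa using fun hxi => hxi.trans hM hij
  · simpa using hij
  · simpa using hirr i

theorem reachDepth_add_le_of_pow_apply_pos (hM : ∀ i j, 0 ≤ M i j)
    (hirr : ∀ i, ¬ M.Reaches i i) {k : ℕ} {i j : ι} (h : 0 < (M ^ k) i j) :
    M.reachDepth i + k ≤ M.reachDepth j := by
  induction k generalizing i with
  | zero =>
    obtain rfl : i = j := by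
      by_contra hij
      simp [one_apply_ne hij] at h
    simp
  | succ k ih =>
    obtain ⟨l, hil, hlj⟩ := exists_pos_of_pow_succ_apply_pos hM h
    have hstep : M.reachDepth i < M.reachDepth l :=
      reachDepth_lt_reachDepth hM hirr ⟨0, by simpa using hil⟩
    have hrest := ih hlj
    omega

theorem pow_card_eq_zero_of_not_reaches_self (hM : ∀ i j, 0 ≤ M i j)
    (hirr : ∀ i, ¬ M.Reaches i i) : M ^ Fintype.card ι = 0 := by
  ext i j
  refine ((pow_apply_nonneg hM _ i j).eq_of_not_lt fun h => ?_).symm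
  have hclimb := reachDepth_add_le_of_pow_apply_pos hM hirr h
  have hbound := reachDepth_lt_card hirr j
  omega

end Reaches

theorem trace_pow_succ_eq_zero_iff_pow_card_eq_zero [CommRing R] [LinearOrder R]
    [IsStrictOrderedRing R] {M : Matrix ι ι R} (hM : ∀ i j, 0 ≤ M i j) :
    (∀ k, trace (M ^ (k + 1)) = 0) ↔ M ^ Fintype.card ι = 0 := by
  constructor
  · intro htr
    refine pow_card_eq_zero_of_not_reaches_self hM fun i ⟨k, hk⟩ => hk.ne' ?_
    exact (sum_eq_zero_iff_of_nonneg fun i _ => pow_apply_nonneg hM _ i i).1 (htr k) i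
      (mem_univ i)
  · intro hnil k
    exact (isNilpotent_trace_of_isNilpotent (IsNilpotent.pow_succ k ⟨_, hnil⟩)).eq_zero

theorem hasSum_trace_exp (M : Matrix ι ι ℝ) :
    HasSum (fun k => (k !⁻¹ : ℝ) * trace (M ^ k)) (trace (exp M)) := by
  -- any submultiplicative norm on matrices yields the power series of `exp`
  let : NormedRing (Matrix ι ι ℝ) := Matrix.linftyOpNormedRing
  let : NormedAlgebra ℝ (Matrix ι ι ℝ) := Matrix.linftyOpNormedAlgebra
  have h := (exp_series_hasSum_exp' (𝕂 := ℝ) M).map (traceAddMonoidHom ι ℝ)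
    continuous_id.matrix_trace
  simp only [Function.comp_def, traceAddMonoidHom_apply, trace_smul, smul_eq_mul] at h
  exact h

theorem trace_exp_eq_card_iff {M : Matrix ι ι ℝ} (hM : ∀ i j, 0 ≤ M i j) :
    trace (exp M) = Fintype.card ι ↔ ∀ k, trace (M ^ (k + 1)) = 0 := by
  set term : ℕ → ℝ := fun k => ((k + 1) !⁻¹ : ℝ) * trace (M ^ (k + 1)) with hterm
  have htail : HasSum term (trace (exp M) - Fintype.card ι) := by
    simpa using (hasSum_nat_add_iff' 1).2 (hasSum_trace_exp M)
  have hnonneg k : 0 ≤ term k :=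
    mul_nonneg (by positivity) (sum_nonneg fun i _ => pow_apply_nonneg hM _ i i)
  calc trace (exp M) = Fintype.card ι
      ↔ HasSum term 0 := by
        rw [← sub_eq_zero]
        exact ⟨fun h => h ▸ htail, htail.unique⟩
    _ ↔ ∀ k, term k = 0 := (hasSum_zero_iff_of_nonneg hnonneg).trans funext_iff
    _ ↔ ∀ k, trace (M ^ (k + 1)) = 0 := by simp [hterm, Nat.factorial_ne_zero]

end Matrix

/-- For an entrywise nonnegative real `n × n` matrix `M`, `tr(expm(M)) = n` iff `M`
is nilpotent (`M^n = 0`); in particular, for any real `n × n` matrix `A`,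
`tr(expm(A ⊙ A)) = n` iff the entrywise square `A ⊙ A` is nilpotent. -/
theorem trace_exp_eq_iff_nilpotent {n : ℕ} (M : Matrix (Fin n) (Fin n) ℝ)
    (hM : ∀ i j, 0 ≤ M i j) :
    ((NormedSpace.exp M).trace = n ↔ M ^ n = 0) ∧
      ∀ A : Matrix (Fin n) (Fin n) ℝ,
        ((NormedSpace.exp (A ⊙ A)).trace = n ↔ (A ⊙ A) ^ n = 0) := by
  have key (N : Matrix (Fin n) (Fin n) ℝ) (hN : ∀ i j, 0 ≤ N i j) :
      (NormedSpace.exp N).trace = n ↔ N ^ n = 0 := by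
    simpa using (trace_exp_eq_card_iff hN).trans (trace_pow_succ_eq_zero_iff_pow_card_eq_zero hN)
  exact ⟨key M hM, fun A => key (A ⊙ A) fun i j => mul_self_nonneg (A i j)⟩
end

section
/- Let M be a real n×n matrix with entrywise nonnegative entries and let α > 0. Then tr((I + α·M)^n) ≥ n, with equality tr((I + α·M)^n) = n if and only if M is nilpotent, i.e., M^n = 0. -/
open Matrix Finset

section Aux

variable {n : ℕ}

lemma pow_entry_nonneg (M : Matrix (Fin n) (Fin n) ℝ) (hM : ∀ i j, 0 ≤ M i j) (m : ℕ) :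
    ∀ i j, 0 ≤ (M ^ m) i j := by
  induction m with
  | zero => intro i j; rw [pow_zero]; by_cases h : i = j <;> simp [Matrix.one_apply, h]
  | succ m ih =>
      intro i j
      rw [pow_succ, Matrix.mul_apply]
      exact Finset.sum_nonneg fun k _ => mul_nonneg (ih i k) (hM k j)

lemma exists_walk (M : Matrix (Fin n) (Fin n) ℝ) (hM : ∀ i j, 0 ≤ M i j) :
    ∀ m : ℕ, ∀ x y : Fin n, 0 < (M ^ m) x y →
      ∃ v : ℕ → Fin n, v 0 = x ∧ v m = y ∧ ∀ i < m, 0 < M (v i) (v (i + 1)) := by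
  intro m
  induction m with
  | zero =>
      intro x y h
      have hxy : x = y := by
        by_contra hxy
        rw [pow_zero, Matrix.one_apply_ne hxy] at h
        exact lt_irrefl 0 h
      exact ⟨fun _ => x, rfl, hxy ▸ rfl, by omega⟩
  | succ m ih =>
      intro x y h
      rw [pow_succ, Matrix.mul_apply] at h
      have : ∃ z ∈ Finset.univ, 0 < (M ^ m) x z * M z y := by
        by_contra hc
        push_neg at hc
        have : ∑ z, (M ^ m) x z * M z y ≤ 0 :=
          Finset.sum_nonpos fun z _ => hc z (Finset.mem_univ z)
        linarith
      obtain ⟨z, -, hz⟩ := this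
      have h1 : 0 < (M ^ m) x z :=
        lt_of_le_of_ne (pow_entry_nonneg M hM m x z) (by
          intro h0; rw [← h0, zero_mul] at hz; exact lt_irrefl 0 hz)
      have h2 : 0 < M z y :=
        lt_of_le_of_ne (hM z y) (by
          intro h0; rw [← h0, mul_zero] at hz; exact lt_irrefl 0 hz)
      obtain ⟨v, hv0, hvm, hve⟩ := ih x z h1
      refine ⟨fun i => if i ≤ m then v i else y, by simpa using hv0, by simp, ?_⟩
      intro i hi
      rcases lt_or_eq_of_le (Nat.lt_succ_iff.mp hi) with h' | h'
      · simp only [if_pos (show i ≤ m by omega), if_pos (show i + 1 ≤ m by omega)]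
        exact hve i h'
      · subst h'
        simp only [if_pos le_rfl, if_neg (show ¬ i + 1 ≤ i by omega), hvm]
        exact h2

lemma walk_le_pow (M : Matrix (Fin n) (Fin n) ℝ) (hM : ∀ i j, 0 ≤ M i j) (v : ℕ → Fin n) :
    ∀ m : ℕ, (∏ i ∈ Finset.range m, M (v i) (v (i + 1))) ≤ (M ^ m) (v 0) (v m) := by
  intro m
  induction m with
  | zero => simp [Matrix.one_apply]
  | succ m ih =>
      rw [pow_succ, Matrix.mul_apply, Finset.prod_range_succ]
      calc (∏ i ∈ Finset.range m, M (v i) (v (i + 1))) * M (v m) (v (m + 1))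
          ≤ (M ^ m) (v 0) (v m) * M (v m) (v (m + 1)) :=
            mul_le_mul_of_nonneg_right ih (hM (v m) (v (m + 1)))
        _ ≤ ∑ z, (M ^ m) (v 0) z * M z (v (m + 1)) :=
            Finset.single_le_sum (f := fun z => (M ^ m) (v 0) z * M z (v (m + 1)))
              (fun z _ => mul_nonneg (pow_entry_nonneg M hM m (v 0) z) (hM z (v (m + 1))))
              (Finset.mem_univ (v m))

/-- Key lemma: nonnegative matrix with all power traces vanishing is nilpotent. -/
lemma nilpotent_of_traces_zero (M : Matrix (Fin n) (Fin n) ℝ) (hM : ∀ i j, 0 ≤ M i j)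
    (htr : ∀ k, 1 ≤ k → k ≤ n → (M ^ k).trace = 0) : M ^ n = 0 := by
  ext i j
  by_contra hij
  have hpos : 0 < (M ^ n) i j :=
    lt_of_le_of_ne (pow_entry_nonneg M hM n i j) (Ne.symm hij)
  obtain ⟨v, hv0, hvn, hve⟩ := exists_walk M hM n i j hpos
  -- pigeonhole: v restricted to Fin (n+1) is not injective
  have hninj : ¬ Function.Injective (fun k : Fin (n + 1) => v k) := by
    intro hinj
    have := Fintype.card_le_of_injective _ hinj
    simp at this
  rw [Function.not_injective_iff] at hninj
  obtain ⟨a, b, hab, hne⟩ := hninj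
  -- wlog a < b
  obtain ⟨a, b, hab, hlt⟩ : ∃ a b : Fin (n + 1), v a = v b ∧ (a : ℕ) < b := by
    rcases lt_or_gt_of_ne hne with h | h
    · exact ⟨a, b, hab, h⟩
    · exact ⟨b, a, hab.symm, h⟩
  set ℓ := (b : ℕ) - (a : ℕ) with hℓ
  have hℓ1 : 1 ≤ ℓ := by omega
  have hℓn : ℓ ≤ n := by omega
  set w : ℕ → Fin n := fun i => v ((a : ℕ) + i) with hw
  have hwalk : ∀ i < ℓ, 0 < M (w i) (w (i + 1)) := by
    intro i hi
    have : (a : ℕ) + i < n := by omega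
    have := hve ((a : ℕ) + i) this
    simpa [hw, Nat.add_assoc] using this
  have hdiag : 0 < (M ^ ℓ) (w 0) (w ℓ) := by
    refine lt_of_lt_of_le ?_ (walk_le_pow M hM w ℓ)
    exact Finset.prod_pos fun i hi => hwalk i (Finset.mem_range.mp hi)
  have hwl : w ℓ = w 0 := by
    simp only [hw]
    have : (a : ℕ) + ℓ = (b : ℕ) := by omega
    rw [this]
    simp only [Nat.add_zero]
    rw [← hab]
  rw [hwl] at hdiag
  -- but trace is zero, so diagonal entry is zero
  have htr0 := htr ℓ hℓ1 hℓn
  have : (M ^ ℓ) (w 0) (w 0) = 0 := by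
    have hnn : ∀ x ∈ Finset.univ, 0 ≤ (M ^ ℓ) x x :=
      fun x _ => pow_entry_nonneg M hM ℓ x x
    have := (Finset.sum_eq_zero_iff_of_nonneg hnn).mp htr0
    exact this (w 0) (Finset.mem_univ _)
  rw [this] at hdiag
  exact lt_irrefl 0 hdiag

end Aux

/-- For an entrywise nonnegative real `n × n` matrix `M` and `α > 0`,
`tr((I + α·M)^n) ≥ n`, with equality iff `M` is nilpotent (`M^n = 0`). -/
theorem trace_pow_id_add_smul_ge_iff_nilpotent {n : ℕ} (M : Matrix (Fin n) (Fin n) ℝ)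
    (hM : ∀ i j, 0 ≤ M i j) (α : ℝ) (hα : 0 < α) :
    (n : ℝ) ≤ ((1 + α • M) ^ n).trace ∧
      (((1 + α • M) ^ n).trace = n ↔ M ^ n = 0) := by
  have hexp : (1 + α • M) ^ n
      = ∑ k ∈ Finset.range (n + 1), (n.choose k : ℝ) • α ^ k • M ^ k := by
    rw [add_comm, (Commute.one_right (α • M)).add_pow]
    refine Finset.sum_congr rfl fun k hk => ?_
    rw [one_pow, mul_one, smul_pow, Nat.cast_smul_eq_nsmul, nsmul_eq_mul,
      (Nat.cast_commute (n.choose k) (α ^ k • M ^ k)).eq]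
  have htr : ((1 + α • M) ^ n).trace
      = ∑ k ∈ Finset.range (n + 1), (n.choose k : ℝ) * α ^ k * (M ^ k).trace := by
    rw [hexp, Matrix.trace_sum]
    refine Finset.sum_congr rfl fun k _ => ?_
    rw [Matrix.trace_smul, Matrix.trace_smul, smul_eq_mul, smul_eq_mul, mul_assoc]
  have hsplit : ((1 + α • M) ^ n).trace
      = (∑ k ∈ Finset.range n, (n.choose (k+1) : ℝ) * α ^ (k+1) * (M ^ (k+1)).trace) + n := by
    rw [htr, Finset.sum_range_succ']
    congr 1
    simp [Matrix.trace_one]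
  have htermnn : ∀ k ∈ Finset.range n,
      0 ≤ (n.choose (k+1) : ℝ) * α ^ (k+1) * (M ^ (k+1)).trace := by
    intro k _
    apply mul_nonneg (mul_nonneg (by positivity) (by positivity))
    exact Finset.sum_nonneg fun i _ => pow_entry_nonneg M hM (k+1) i i
  have hsumnn : 0 ≤ ∑ k ∈ Finset.range n, (n.choose (k+1) : ℝ) * α ^ (k+1) * (M ^ (k+1)).trace :=
    Finset.sum_nonneg htermnn
  constructor
  · rw [hsplit]; linarith
  constructor
  · -- equality → nilpotent
    intro heq
    rw [hsplit] at heq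
    have hsum0 : ∑ k ∈ Finset.range n, (n.choose (k+1) : ℝ) * α ^ (k+1) * (M ^ (k+1)).trace = 0 := by
      linarith
    have hterm0 := (Finset.sum_eq_zero_iff_of_nonneg htermnn).mp hsum0
    apply nilpotent_of_traces_zero M hM
    intro k hk1 hkn
    obtain ⟨j, rfl⟩ : ∃ j, k = j + 1 := ⟨k - 1, by omega⟩
    have := hterm0 j (Finset.mem_range.mpr (by omega))
    have hc : (0:ℝ) < (n.choose (j+1) : ℝ) := by
      have := Nat.choose_pos (show j + 1 ≤ n by omega)
      exact_mod_cast this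
    have hap : (0:ℝ) < α ^ (j+1) := by positivity
    have := mul_eq_zero.mp this
    rcases this with h | h
    · exact absurd h (by positivity)
    · exact h
  · -- nilpotent → equality
    intro hnil
    rw [hsplit]
    have hterm0 : ∀ k ∈ Finset.range n,
        (n.choose (k+1) : ℝ) * α ^ (k+1) * (M ^ (k+1)).trace = 0 := by
      intro k hk
      have hknil : IsNilpotent (M ^ (k+1)) := by
        refine ⟨n, ?_⟩
        rw [← pow_mul]
        have : (k+1) * n = n + k * n := by ring
        rw [this, pow_add, hnil, zero_mul]
      have := Matrix.isNilpotent_trace_of_isNilpotent hknil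
      rw [this.eq_zero, mul_zero]
    rw [Finset.sum_eq_zero hterm0, zero_add]
end
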